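/- In genus 3, there exist six pairwise distinct Göpel groups G₁,…,G₆ ⊆ 𝔽₂⁶ with even cosets M₁,…,M₆ such that for every even characteristic m ∈ 𝔽₂⁶, the number of indices i ∈ {1,2,3} with m ∈ Mᵢ equals the number of indices i ∈ {4,5,6} with m ∈ Mᵢ; consequently the tautological cubic relation ϑ_{G₁}ϑ_{G₂}ϑ_{G₃} = ϑ_{G₄}ϑ_{G₅}ϑ_{G₆} holds as an identity of monomials in the theta nullwerte. -/

import Mathlib

open BigOperators Matrix

/-- Theta characteristics in genus `g`: pairs `(a, b)` with `a, b ∈ 𝔽₂^g`. -/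
abbrev TChar (g : ℕ) := (Fin g → ZMod 2) × (Fin g → ZMod 2)

/-- A theta characteristic `(a, b)` is even if `Σᵢ aᵢbᵢ = 0` in `𝔽₂`. -/
def IsEvenChar {g : ℕ} (m : TChar g) : Prop := ∑ i, m.1 i * m.2 i = 0

/-- The standard symplectic pairing `⟨m,n⟩ = aᵀβ + bᵀα` on `𝔽₂^{2g}`. -/
def symplecticPairing {g : ℕ} (m n : TChar g) : ZMod 2 :=
  ∑ i, (m.1 i * n.2 i + m.2 i * n.1 i)

/-- A subspace is totally isotropic if the symplectic pairing vanishes on it. -/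
def IsIsotropic {g : ℕ} (G : Submodule (ZMod 2) (TChar g)) : Prop :=
  ∀ m ∈ G, ∀ n ∈ G, symplecticPairing m n = 0

/-- A Göpel group is a maximal totally isotropic subspace of `𝔽₂^{2g}`. -/
def IsGopel {g : ℕ} (G : Submodule (ZMod 2) (TChar g)) : Prop :=
  IsIsotropic G ∧ ∀ G' : Submodule (ZMod 2) (TChar g), IsIsotropic G' → G ≤ G' → G' = G

/-- The even coset of a Göpel group `G`: those `m` with `m + G` consisting of
even characteristics. -/
def evenCoset {g : ℕ} (G : Submodule (ZMod 2) (TChar g)) : Set (TChar g) :=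
  {m | ∀ x ∈ G, IsEvenChar (m + x)}

/-- The Siegel upper half space of genus `g`. -/
def SiegelHalfSpace (g : ℕ) : Set (Matrix (Fin g) (Fin g) ℂ) :=
  {Z | Z.IsSymm ∧ (Z.map Complex.im).PosDef}

/-- The theta nullwert `ϑ[m](Z)` for the characteristic `m = (a,b)`. -/
noncomputable def thetaNull (g : ℕ) (Z : Matrix (Fin g) (Fin g) ℂ)
    (m : TChar g) : ℂ :=
  ∑' n : Fin g → ℤ, Complex.exp ((Real.pi : ℂ) * Complex.I *
    ((∑ i, ∑ j, ((n i : ℂ) + ((m.1 i).val : ℂ) / 2) * Z i j * ((n j : ℂ) + ((m.1 j).val : ℂ) / 2)) +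
      ∑ i, ((m.2 i).val : ℂ) * (2 * (n i : ℂ) + ((m.1 i).val : ℂ))))

/-- The Göpel form `ϑ_G = ∏_{m ∈ M} ϑ[m]`, `M` the even coset of `G`. -/
noncomputable def gopelTheta (g : ℕ) (G : Submodule (ZMod 2) (TChar g))
    (Z : Matrix (Fin g) (Fin g) ℂ) : ℂ :=
  ∏ᶠ m ∈ evenCoset G, thetaNull g Z m


/-! Each of the six Göpel groups is written as the span of three generators, so isotropy only has
to be checked on generators and maximality amounts to every vector orthogonal to the generators
lying in the span. These checks, distinctness and the coset counts are finite computations in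
`𝔽₂⁶`. The theta relation then follows from
`∏ᵢ ∏_{m ∈ Mᵢ} ϑ[m] = ∏_m ϑ[m] ^ #{i | m ∈ Mᵢ}`, whose exponents agree on the two sides. -/

open Classical in
theorem prod_finprod_mem_eq_prod_pow_card {ι α M : Type*} [Fintype α] [CommMonoid M]
    (s : Finset ι) (S : ι → Set α) (f : α → M) :
    ∏ i ∈ s, ∏ᶠ m ∈ S i, f m = ∏ m, f m ^ (s.filter (fun i => m ∈ S i)).card := by
  simp_rw [finprod_mem_def, finprod_eq_prod_of_fintype, Set.mulIndicator_apply]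
  rw [Finset.prod_comm]
  refine Finset.prod_congr rfl fun m _ => ?_
  rw [Finset.prod_ite, Finset.prod_const_one, mul_one, Finset.prod_const]

theorem prod_finprod_mem_eq_of_card_eq {ι α M : Type*} [Fintype ι] [Finite α] [CommMonoid M]
    (p q : ι → Prop) [DecidablePred p] [DecidablePred q] (S : ι → Set α) (f : α → M)
    (h : ∀ m, Nat.card {i // p i ∧ m ∈ S i} = Nat.card {i // q i ∧ m ∈ S i}) :
    ∏ i with p i, ∏ᶠ m ∈ S i, f m = ∏ i with q i, ∏ᶠ m ∈ S i, f m := by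
  classical
  have := Fintype.ofFinite α
  simp only [prod_finprod_mem_eq_prod_pow_card, Finset.filter_filter]
  refine Finset.prod_congr rfl fun m _ => ?_
  have hm := h m
  simp only [Nat.card_eq_fintype_card, Fintype.card_subtype] at hm
  convert congrArg (f m ^ ·) hm using 3

namespace TChar

variable {g : ℕ}

def symplecticForm (g : ℕ) : LinearMap.BilinForm (ZMod 2) (TChar g) :=
  LinearMap.mk₂ (ZMod 2) symplecticPairing
    (fun _ _ _ => by
      simp only [symplecticPairing, ← Finset.sum_add_distrib]
      exact Finset.sum_congr rfl fun _ _ => by simp; ring)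
    (fun _ _ _ => by
      simp only [symplecticPairing, smul_eq_mul, Finset.mul_sum]
      exact Finset.sum_congr rfl fun _ _ => by simp; ring)
    (fun _ _ _ => by
      simp only [symplecticPairing, ← Finset.sum_add_distrib]
      exact Finset.sum_congr rfl fun _ _ => by simp; ring)
    (fun _ _ _ => by
      simp only [symplecticPairing, smul_eq_mul, Finset.mul_sum]
      exact Finset.sum_congr rfl fun _ _ => by simp; ring)

theorem symplecticPairing_comm (m n : TChar g) :
    symplecticPairing m n = symplecticPairing n m :=
  Finset.sum_congr rfl fun _ _ => by ring

theorem symplecticPairing_eq_zero_of_mem_span {S : Set (TChar g)} {m n : TChar g}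
    (hm : m ∈ Submodule.span (ZMod 2) S) (h : ∀ s ∈ S, symplecticPairing s n = 0) :
    symplecticPairing m n = 0 :=
  (Submodule.span_le (p := LinearMap.ker ((symplecticForm g).flip n)) |>.mpr h) hm

theorem isIsotropic_span {S : Set (TChar g)}
    (h : ∀ s ∈ S, ∀ t ∈ S, symplecticPairing s t = 0) :
    IsIsotropic (Submodule.span (ZMod 2) S) := by
  intro m hm n hn
  rw [symplecticPairing_comm]
  refine symplecticPairing_eq_zero_of_mem_span hn fun t ht => ?_
  rw [symplecticPairing_comm]
  exact symplecticPairing_eq_zero_of_mem_span hm (h · · t ht)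

theorem isGopel_of_forall_pairing_eq_zero_imp_mem {G : Submodule (ZMod 2) (TChar g)}
    (hG : IsIsotropic G) (hmax : ∀ n, (∀ m ∈ G, symplecticPairing m n = 0) → n ∈ G) :
    IsGopel G :=
  ⟨hG, fun _ hG' hle => le_antisymm (fun n hn => hmax n fun m hm => hG' m (hle hm) n hn) hle⟩

theorem isGopel_span {S : Set (TChar g)} (hS : ∀ s ∈ S, ∀ t ∈ S, symplecticPairing s t = 0)
    (hmax : ∀ n, (∀ s ∈ S, symplecticPairing s n = 0) → n ∈ Submodule.span (ZMod 2) S) :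
    IsGopel (Submodule.span (ZMod 2) S) :=
  isGopel_of_forall_pairing_eq_zero_imp_mem (isIsotropic_span hS)
    fun n hn => hmax n fun s hs => hn s (Submodule.subset_span hs)

instance : DecidablePred (IsEvenChar (g := g)) :=
  fun _ => inferInstanceAs (Decidable (_ = _))

instance {ι : Type*} [Fintype ι] [DecidableEq ι] (v : ι → TChar g) :
    DecidablePred (· ∈ Submodule.span (ZMod 2) (Set.range v)) :=
  fun _ => decidable_of_iff _ (Submodule.mem_span_range_iff_exists_fun (ZMod 2)).symm

theorem mem_evenCoset_span_range_iff {ι : Type*} [Fintype ι] (v : ι → TChar g) (m : TChar g) :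
    m ∈ evenCoset (Submodule.span (ZMod 2) (Set.range v)) ↔
      ∀ c : ι → ZMod 2, IsEvenChar (m + ∑ i, c i • v i) := by
  refine ⟨fun h c => h _ ((Submodule.mem_span_range_iff_exists_fun _).mpr ⟨c, rfl⟩),
    fun h x hx => ?_⟩
  obtain ⟨c, rfl⟩ := (Submodule.mem_span_range_iff_exists_fun (ZMod 2)).mp hx
  exact h c

end TChar

open TChar

def gopelGenerators : Fin 6 → Fin 3 → TChar 3 := ![
  ![(![1,0,0], ![1,0,0]), (![0,1,0], ![0,1,0]), (![0,0,0], ![0,0,1])],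
  ![(![0,1,1], ![1,0,0]), (![1,0,1], ![0,1,0]), (![1,1,0], ![0,0,1])],
  ![(![1,1,0], ![0,0,0]), (![0,0,0], ![1,1,0]), (![0,0,1], ![0,0,1])],
  ![(![1,0,0], ![1,0,0]), (![0,1,0], ![0,1,0]), (![0,0,1], ![0,0,1])],
  ![(![1,1,0], ![0,0,0]), (![0,0,0], ![1,1,0]), (![0,0,0], ![0,0,1])],
  ![(![0,1,1], ![1,0,0]), (![1,0,1], ![0,1,0]), (![1,1,1], ![0,0,1])]]

abbrev gopelGroup (i : Fin 6) : Submodule (ZMod 2) (TChar 3) :=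
  Submodule.span (ZMod 2) (Set.range (gopelGenerators i))

theorem symplecticPairing_gopelGenerators (i : Fin 6) (j k : Fin 3) :
    symplecticPairing (gopelGenerators i j) (gopelGenerators i k) = 0 := by
  revert i j k; decide

theorem mem_gopelGroup_of_forall_symplecticPairing_eq_zero (i : Fin 6) (n : TChar 3)
    (h : ∀ j, symplecticPairing (gopelGenerators i j) n = 0) : n ∈ gopelGroup i := by
  revert i n; decide

theorem eq_of_forall_gopelGenerators_mem (i j : Fin 6)
    (h : ∀ k, gopelGenerators i k ∈ gopelGroup j) : i = j := by
  revert i j; decide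

theorem card_mem_evenCoset_gopelGroup (m : TChar 3) :
    Nat.card {i : Fin 6 // i.val < 3 ∧ m ∈ evenCoset (gopelGroup i)} =
      Nat.card {i : Fin 6 // 3 ≤ i.val ∧ m ∈ evenCoset (gopelGroup i)} := by
  simp only [mem_evenCoset_span_range_iff, Nat.card_eq_fintype_card]
  revert m; decide

theorem isGopel_gopelGroup (i : Fin 6) : IsGopel (gopelGroup i) :=
  isGopel_span
    (Set.forall_mem_range.2 fun j => Set.forall_mem_range.2 fun k =>
      symplecticPairing_gopelGenerators i j k)
    fun n hn => mem_gopelGroup_of_forall_symplecticPairing_eq_zero i n fun j => hn _ ⟨j, rfl⟩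

theorem gopelGroup_injective : Function.Injective gopelGroup := fun i j hij =>
  eq_of_forall_gopelGenerators_mem i j fun k => hij ▸ Submodule.subset_span ⟨k, rfl⟩

/-- In genus 3 there are six pairwise distinct Göpel groups `G₁,…,G₆` such that every
even characteristic belongs to as many of the even cosets `M₁, M₂, M₃` as of
`M₄, M₅, M₆`; consequently `ϑ_{G₁}ϑ_{G₂}ϑ_{G₃} = ϑ_{G₄}ϑ_{G₅}ϑ_{G₆}`. -/
theorem exists_gopel_cubic_relation :
    ∃ G : Fin 6 → Submodule (ZMod 2) (TChar 3),
      (∀ i, IsGopel (G i)) ∧ Function.Injective G ∧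
      (∀ m : TChar 3, IsEvenChar m →
        Nat.card {i : Fin 6 // i.val < 3 ∧ m ∈ evenCoset (G i)} =
          Nat.card {i : Fin 6 // 3 ≤ i.val ∧ m ∈ evenCoset (G i)}) ∧
      (∀ Z ∈ SiegelHalfSpace 3,
        gopelTheta 3 (G 0) Z * gopelTheta 3 (G 1) Z * gopelTheta 3 (G 2) Z =
          gopelTheta 3 (G 3) Z * gopelTheta 3 (G 4) Z * gopelTheta 3 (G 5) Z) := by
  refine ⟨gopelGroup, isGopel_gopelGroup, gopelGroup_injective,
    fun m _ => card_mem_evenCoset_gopelGroup m, fun Z _ => ?_⟩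
  have := prod_finprod_mem_eq_of_card_eq (·.val < 3) (3 ≤ ·.val) (evenCoset ∘ gopelGroup)
    (thetaNull 3 Z) card_mem_evenCoset_gopelGroup
  simpa [Finset.prod_filter, Fin.prod_univ_six, gopelTheta] using this
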